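/- arXiv:1301.0761 — 2 statements merged into one kernel-verified Lean document; each statement's English description precedes it below -/
import Mathlib

section
/- Let ⊙ be a pseudo-multiplication whose set of ⊙-finite elements equals [0, φ) for some φ ∈ (1_⊙, ∞]. Then t ⊙ φ = φ ⊙ t = φ for all 0 < t ≤ φ; in particular, φ is idempotent: φ ⊙ φ = φ. -/
open Set Filter Topology
open scoped ENNReal

/-- A pseudo-multiplication on `[0,∞]`. -/
structure PseudoMul where
  mul : ℝ≥0∞ → ℝ≥0∞ → ℝ≥0∞
  assoc : ∀ a b c, mul (mul a b) c = mul a (mul b c)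
  continuousOn : ContinuousOn (fun p : ℝ≥0∞ × ℝ≥0∞ => mul p.1 p.2) (Ioo 0 ⊤ ×ˢ univ)
  continuousOn_left : ∀ t, ContinuousOn (fun s => mul s t) (Ioi 0)
  mono : ∀ ⦃a b : ℝ≥0∞⦄, a ≤ b → ∀ ⦃c d : ℝ≥0∞⦄, c ≤ d → mul a c ≤ mul b d
  one : ℝ≥0∞
  one_mul : ∀ t, mul one t = t
  eq_zero_of_mul : ∀ s t, mul s t = 0 → s = 0 ∨ t = 0
  zero_mul : ∀ t, mul 0 t = 0
  mul_zero : ∀ t, mul t 0 = 0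

/-- The kernel `O(t) = ⨅_{s>0} s ⊙ t`. -/
noncomputable def PseudoMul.O (P : PseudoMul) (t : ℝ≥0∞) : ℝ≥0∞ :=
  ⨅ s ∈ Ioi (0 : ℝ≥0∞), P.mul s t

/-!
Write `F = {t | O t = 0} = [0, φ)`. Since `O(s ⊙ u) ≤ O u` whenever `O s = 0`, the set `F` is closed
under `⊙`, and joint continuity at `(φ, φ)` (for `φ < ∞`) gives `φ ⊙ φ ≤ φ`, hence `t ⊙ φ, φ ⊙ t ≤ φ`
for `t ≤ φ`. Conversely, for `t > 0` we have `O φ ≤ O(t ⊙ φ)` because `s ⊙ t > 0` for every `s > 0`,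
so `t ⊙ φ ∈ F` would force `φ ∈ F`. Then `φ ≤ s ⊙ φ` for all `s > 0` makes `φ ⊙ t ≤ O(φ ⊙ t)`,
so `φ ⊙ t ∈ F` would force the product of the nonzero elements `φ` and `t` to vanish.
-/

namespace PseudoMul

variable (P : PseudoMul) {a c s t u : ℝ≥0∞}

theorem mul_pos (hs : 0 < s) (ht : 0 < t) : 0 < P.mul s t := by
  refine pos_iff_ne_zero.mpr fun h => ?_
  rcases P.eq_zero_of_mul s t h with h | h
  · exact hs.ne' h
  · exact ht.ne' h

theorem O_le_mul (hs : 0 < s) : P.O t ≤ P.mul s t :=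
  iInf₂_le s hs

theorem O_zero : P.O 0 = 0 :=
  nonpos_iff_eq_zero.mp ((P.O_le_mul one_pos).trans_eq (P.mul_zero 1))

theorem O_mul_le_of_O_eq_zero (hs : P.O s = 0) : P.O (P.mul s u) ≤ P.O u := by
  refine le_iInf₂ fun v (hv : 0 < v) => ?_
  obtain ⟨r, hr, hrs⟩ : ∃ r ∈ Ioi (0 : ℝ≥0∞), P.mul r s < v := by
    have hOs : P.O s < v := hs ▸ hv
    simpa only [O, iInf_lt_iff, exists_prop] using hOs
  calc P.O (P.mul s u) ≤ P.mul r (P.mul s u) := P.O_le_mul hr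
    _ = P.mul (P.mul r s) u := (P.assoc r s u).symm
    _ ≤ P.mul v u := P.mono hrs.le le_rfl

theorem O_le_O_mul (ht : 0 < t) : P.O u ≤ P.O (P.mul t u) :=
  le_iInf₂ fun s (hs : 0 < s) => P.assoc s t u ▸ P.O_le_mul (P.mul_pos hs ht)

theorem mul_le_O_mul (ha : ∀ s, 0 < s → a ≤ P.mul s a) : P.mul a t ≤ P.O (P.mul a t) :=
  le_iInf₂ fun s hs => P.assoc s a t ▸ P.mono (ha s hs) le_rfl

theorem mul_self_le_of_forall_lt (ha : 0 < a) (ha_top : a ≠ ⊤)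
    (h : ∀ s ∈ Ioo 0 a, P.mul s s ≤ c) : P.mul a a ≤ c := by
  have hcont : ContinuousWithinAt (fun s => P.mul s s) (Ioo 0 ⊤) a :=
    (P.continuousOn (a, a) ⟨⟨ha, ha_top.lt_top⟩, mem_univ a⟩).comp (f := fun s => (s, s))
      (continuous_id.prodMk continuous_id).continuousWithinAt fun _ hs => ⟨hs, mem_univ _⟩
  have : (𝓝[Ioo 0 a] a).NeBot := right_nhdsWithin_Ioo_neBot ha
  exact le_of_tendsto (hcont.mono (Ioo_subset_Ioo_right le_top))
    (eventually_nhdsWithin_of_forall h)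

section FiniteEqIio

variable {P} {φ : ℝ≥0∞} (hF : {t | P.O t = 0} = Iio φ)
include hF

theorem O_eq_zero_iff_lt : P.O t = 0 ↔ t < φ :=
  Set.ext_iff.mp hF t

theorem pos_of_finite_eq_Iio : 0 < φ :=
  (O_eq_zero_iff_lt hF).mp P.O_zero

theorem mul_lt_of_finite_eq_Iio (hs : s < φ) (hu : u < φ) : P.mul s u < φ := by
  rw [← O_eq_zero_iff_lt hF] at hs hu ⊢
  exact le_antisymm (hu ▸ P.O_mul_le_of_O_eq_zero hs) zero_le

theorem mul_self_le_of_finite_eq_Iio : P.mul φ φ ≤ φ := by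
  rcases eq_or_ne φ ⊤ with rfl | hφ_top
  · exact le_top
  exact P.mul_self_le_of_forall_lt (pos_of_finite_eq_Iio hF) hφ_top fun s hs =>
    (mul_lt_of_finite_eq_Iio hF hs.2 hs.2).le

theorem le_mul_left_of_finite_eq_Iio (ht : 0 < t) : φ ≤ P.mul t φ := by
  by_contra! hlt
  have hO : P.O φ = 0 :=
    le_antisymm ((O_eq_zero_iff_lt hF).mpr hlt ▸ P.O_le_O_mul ht) zero_le
  exact lt_irrefl φ ((O_eq_zero_iff_lt hF).mp hO)

theorem le_mul_right_of_finite_eq_Iio (ht : 0 < t) : φ ≤ P.mul φ t := by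
  by_contra! hlt
  have hle : P.mul φ t ≤ P.O (P.mul φ t) :=
    P.mul_le_O_mul fun _ hs => le_mul_left_of_finite_eq_Iio hF hs
  rw [(O_eq_zero_iff_lt hF).mpr hlt] at hle
  exact (P.mul_pos (pos_of_finite_eq_Iio hF) ht).ne' (le_antisymm hle zero_le)

end FiniteEqIio

end PseudoMul

theorem phi_absorbing_general (P : PseudoMul) (φ : ℝ≥0∞)
    (hF : {t : ℝ≥0∞ | P.O t = 0} = Iio φ) :
    (∀ t : ℝ≥0∞, 0 < t → t ≤ φ → P.mul t φ = φ ∧ P.mul φ t = φ) ∧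
    P.mul φ φ = φ := by
  have hφφ := P.mul_self_le_of_finite_eq_Iio hF
  refine ⟨fun t ht htφ => ⟨?_, ?_⟩, ?_⟩
  · exact le_antisymm ((P.mono htφ le_rfl).trans hφφ) (P.le_mul_left_of_finite_eq_Iio hF ht)
  · exact le_antisymm ((P.mono le_rfl htφ).trans hφφ) (P.le_mul_right_of_finite_eq_Iio hF ht)
  · exact le_antisymm hφφ (P.le_mul_left_of_finite_eq_Iio hF (P.pos_of_finite_eq_Iio hF))

theorem phi_absorbing (P : PseudoMul) (φ : ℝ≥0∞) (hφ : P.one < φ)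
    (hF : {t : ℝ≥0∞ | P.O t = 0} = Iio φ) :
    (∀ t : ℝ≥0∞, 0 < t → t ≤ φ → P.mul t φ = φ ∧ P.mul φ t = φ) ∧
    P.mul φ φ = φ :=
  phi_absorbing_general P φ hF
end

section
/- For a non-degenerate pseudo-multiplication ⊙, if s ⊙ t ≤ 1_⊙ for some s > 0, then lim_{s'→0⁺} t ⊙ s' = 0; in particular there exists s' > 0 with t ⊙ s' ≤ 1_⊙. -/
open Set Filter Topology
open scoped ENNReal

/- If `s ⊙ t ≤ 1_⊙`, associativity and monotonicity give `s ⊙ (t ⊙ s') ≤ (s ⊙ t) ⊙ s' ≤ s'`.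
So `t ⊙ s' ≥ ε` would force `s ⊙ ε ≤ s'`; as `s ⊙ ε > 0` (no zero divisors), every
`s' < s ⊙ ε` has `t ⊙ s' < ε`, which is the limit. -/

namespace PseudoMul

variable (P : PseudoMul)

theorem one_pos : 0 < P.one := by
  refine pos_iff_ne_zero.2 fun h0 => one_ne_zero (α := ℝ≥0∞) ?_
  simpa [h0, P.zero_mul] using (P.one_mul 1).symm

theorem mul_pos_s14 {a b : ℝ≥0∞} (ha : 0 < a) (hb : 0 < b) : 0 < P.mul a b :=
  pos_iff_ne_zero.2 fun h => (P.eq_zero_of_mul a b h).elim ha.ne' hb.ne'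

theorem mul_mul_le_of_mul_le_one {s t : ℝ≥0∞} (h : P.mul s t ≤ P.one) (u : ℝ≥0∞) :
    P.mul s (P.mul t u) ≤ u :=
  calc P.mul s (P.mul t u) = P.mul (P.mul s t) u := (P.assoc s t u).symm
    _ ≤ P.mul P.one u := P.mono h le_rfl
    _ = u := P.one_mul u

theorem mul_lt_of_lt_mul_of_mul_le_one {s t u ε : ℝ≥0∞} (h : P.mul s t ≤ P.one)
    (hu : u < P.mul s ε) : P.mul t u < ε := by
  by_contra! hε
  exact hu.not_ge ((P.mono le_rfl hε).trans (P.mul_mul_le_of_mul_le_one h u))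

theorem tendsto_mul_nhdsGT_zero_of_mul_le_one {s t : ℝ≥0∞} (hs : 0 < s)
    (h : P.mul s t ≤ P.one) : Tendsto (P.mul t) (𝓝[>] 0) (𝓝 0) := by
  refine ENNReal.tendsto_nhds_zero.2 fun ε hε => ?_
  filter_upwards [mem_nhdsWithin_of_mem_nhds (Iio_mem_nhds (P.mul_pos_s14 hs hε))] with u hu
  exact (P.mul_lt_of_lt_mul_of_mul_le_one h hu).le

end PseudoMul

theorem right_small_of_left_small_general (P : PseudoMul)
    {s t : ℝ≥0∞} (hs : 0 < s) (h : P.mul s t ≤ P.one) :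
    Tendsto (fun s' => P.mul t s') (𝓝[>] (0 : ℝ≥0∞)) (𝓝 0) ∧
    ∃ s' : ℝ≥0∞, 0 < s' ∧ P.mul t s' ≤ P.one := by
  have hlim := P.tendsto_mul_nhdsGT_zero_of_mul_le_one hs h
  refine ⟨hlim, ?_⟩
  obtain ⟨s', hlt, hpos⟩ :=
    ((hlim.eventually (gt_mem_nhds P.one_pos)).and self_mem_nhdsWithin).exists
  exact ⟨s', hpos, hlt.le⟩

theorem right_small_of_left_small (P : PseudoMul) (hnd : P.O P.one = 0)
    {s t : ℝ≥0∞} (hs : 0 < s) (h : P.mul s t ≤ P.one) :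
    Tendsto (fun s' => P.mul t s') (𝓝[>] (0 : ℝ≥0∞)) (𝓝 0) ∧
    ∃ s' : ℝ≥0∞, 0 < s' ∧ P.mul t s' ≤ P.one :=
  right_small_of_left_small_general P hs h
end
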